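/- (Fourier coefficient decay for high-energy Bloch eigenfunctions.) Fix $d \geq 2$, a full-rank lattice $\Lambda$ with dual $\Lambda^\dagger$, a smooth periodic potential $V$, an integer $m \geq 1$ and $\varkappa \in (0,1)$. Let $Q = \sup\{|\xi| : \xi \in \Omega^\dagger\}$ where $\Omega^\dagger$ is the first Brillouin zone. Then there exists $M_m > 0$ (depending on $d$, $\Lambda$, $V$, $m$) such that: for every $k \in \Omega^\dagger$, every normalized eigenfunction $\psi$ of $H(k) = (D+k)^2 + V$ with eigenvalue $\zeta \geq \max\{36Q^2\varkappa^{-2}, (1+m\varkappa)^{2/(d-1)}\varkappa^{-2d/(d-1)}\}$, and every $n \in \Lambda^\dagger$ with $|n| \geq (1+m\varkappa)\sqrt{\zeta}$, the Fourier coefficient satisfies $|\psi_n| < M_m \varkappa^{-m} |n|^{-(3m+1)/2}$. -/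

import Mathlib

/-!
From the eigenvalue equation, `|ψ_n| (|n + k|² - ζ) ≤ ∑_l |V_{n-l}| |ψ_l|`, and for
`|n| ≥ (1 + κ) √ζ` the first factor is at least `κ |n|² / 3`. Induction on `j` then gives
`|ψ_n| κ^j |n|^(2j) ≤ M_j` whenever `|n| ≥ (1 + j κ) √ζ`. In the sum, the terms with `|l|` large
(at least `(1 + (j - 1) κ) √ζ` and at least `|n| / 2`) are controlled by the induction hypothesis
at `l`; for the others `|n - l| ≥ κ |n| / (j + 1)` and `|ψ_l| ≤ 1`, so the rapid decay of the
Fourier coefficients of `V` pays for them, the high-energy condition `κ^d |n|^(d-1) ≥ 1`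
converting powers of `κ` into powers of `|n|`. As `2m ≥ (3m + 1) / 2`, the case `j = m`
implies the claim.
-/

/-- The point of a full-rank lattice (the image of `ℤ^d` under an invertible linear map)
corresponding to the integer vector `v`. -/
noncomputable def latticePt (d : ℕ) (e : (Fin d → ℝ) ≃ₗ[ℝ] EuclideanSpace ℝ (Fin d))
    (v : Fin d → ℤ) : EuclideanSpace ℝ (Fin d) :=
  e (fun i => (v i : ℝ))

namespace BlochDecay

section Convolution

variable {ι E : Type*} [AddCommGroup ι] [NormedAddCommGroup E] (p : ι →+ E) (V : ι → ℂ)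

noncomputable def weightedNorm (t : ℕ) : ℝ := ∑' q, ‖p q‖ ^ t * ‖V q‖

variable {p V}

lemma norm_tsum_conv_le (hV : ∀ t, Summable fun q => ‖p q‖ ^ t * ‖V q‖) {ψ : ι → ℂ}
    {n : ι} {s : ℕ} {a c : ℝ} (hψ : ∀ l, ‖ψ l‖ ≤ a * ‖p (n - l)‖ ^ s + c) :
    ‖∑' l, V (n - l) * ψ l‖ ≤ a * weightedNorm p V s + c * weightedNorm p V 0 := by
  set g : ι → ℝ := fun q => a * (‖p q‖ ^ s * ‖V q‖) + c * (‖p q‖ ^ 0 * ‖V q‖)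
  have hg : Summable fun l => g (n - l) :=
    (Equiv.subLeft n).summable_iff.2 (((hV s).mul_left a).add ((hV 0).mul_left c))
  have hbound : ∀ l, ‖V (n - l) * ψ l‖ ≤ g (n - l) := fun l => by
    rw [norm_mul]
    calc ‖V (n - l)‖ * ‖ψ l‖ ≤ ‖V (n - l)‖ * (a * ‖p (n - l)‖ ^ s + c) := by
          gcongr; exact hψ l
      _ = g (n - l) := by simp only [g]; ring
  have hsum := hg.of_nonneg_of_le (fun _ => norm_nonneg _) hbound
  calc ‖∑' l, V (n - l) * ψ l‖ ≤ ∑' l, ‖V (n - l) * ψ l‖ := norm_tsum_le_tsum_norm hsum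
    _ ≤ ∑' l, g (n - l) := hsum.tsum_le_tsum hbound hg
    _ = ∑' q, g q := (Equiv.subLeft n).tsum_eq g
    _ = a * weightedNorm p V s + c * weightedNorm p V 0 := by
        rw [Summable.tsum_add ((hV s).mul_left a) ((hV 0).mul_left c), tsum_mul_left,
          tsum_mul_left, weightedNorm, weightedNorm]

end Convolution

lemma sq_add_mul_norm_sq_le_norm_add_sq {E : Type*} [NormedAddCommGroup E] {x k : E}
    {κ r : ℝ} (hκ0 : 0 < κ) (hκ1 : κ ≤ 1) (hr : 0 ≤ r) (hk : ‖k‖ ≤ κ * r / 6)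
    (hx : (1 + κ) * r ≤ ‖x‖) :
    r ^ 2 + κ * ‖x‖ ^ 2 / 3 ≤ ‖x + k‖ ^ 2 := by
  have hlow : ‖x‖ - κ * r / 6 ≤ ‖x + k‖ := by
    linarith [norm_sub_le (x + k) k, add_sub_cancel_right x k ▸ norm_sub_le (x + k) k]
  have hpos : 0 ≤ ‖x‖ - κ * r / 6 := by nlinarith
  have hsq : (‖x‖ - κ * r / 6) ^ 2 ≤ ‖x + k‖ ^ 2 := pow_le_pow_left₀ hpos hlow 2
  nlinarith [mul_nonneg (sub_nonneg.2 hx) (sub_nonneg.2 hκ1), mul_nonneg hκ0.le hr,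
    mul_nonneg (mul_nonneg hκ0.le hr) (sub_nonneg.2 hκ1), mul_nonneg (sub_nonneg.2 hx) hr,
    mul_nonneg (sub_nonneg.2 hx) (sub_nonneg.2 hx)]

lemma mul_norm_le_norm_of_mul_add_eq {a ζ c : ℝ} {x S : ℂ} (h : (a : ℂ) * x + S = ζ * x)
    (hc : ζ + c ≤ a) : c * ‖x‖ ≤ ‖S‖ := by
  have hS : S = ((ζ - a : ℝ) : ℂ) * x := by push_cast; linear_combination h
  rw [hS, norm_mul, Complex.norm_real, Real.norm_eq_abs]
  gcongr
  rw [abs_sub_comm]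
  exact (by linarith : c ≤ a - ζ).trans (le_abs_self _)

lemma mul_le_add_two_mul_of_lt_or_lt {κ r ρ a c : ℝ} {j : ℕ} (hκ0 : 0 < κ) (hκ1 : κ ≤ 1)
    (hr : 0 ≤ r) (hρ : (1 + (j + 1) * κ) * r ≤ ρ) (ha : a < (1 + j * κ) * r ∨ a < ρ / 2) (hc : ρ - a ≤ c) :
    κ * ρ ≤ (j + 2) * c := by
  have hj : (0 : ℝ) ≤ j := j.cast_nonneg
  have hρ0 : 0 ≤ ρ := le_trans (by positivity) hρ
  rcases ha with ha | ha
  · nlinarith [mul_nonneg (mul_nonneg (sub_nonneg.2 hκ1) hκ0.le) hr,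
      mul_nonneg (mul_nonneg (sub_nonneg.2 hκ1) hκ0.le) (mul_nonneg hj hr),
      mul_nonneg (sub_nonneg.2 hκ1) (sub_nonneg.2 hρ), mul_nonneg hj (sub_nonneg.2 hρ)]
  · nlinarith

section Eigen

variable {ι E : Type*} [AddCommGroup ι] [NormedAddCommGroup E] (p : ι →+ E) (V : ι → ℂ)
  (b : ℕ)

/-- `r` plays the role of `√ζ`, and `1 ≤ κ ^ (b + 1) * r ^ b` (with `b = d - 1`) is what the
high-energy condition on `ζ` is used for. -/
structure IsHighEnergyEigen (κ r : ℝ) (k : E) (ψ : ι → ℂ) : Prop where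
  κ_pos : 0 < κ
  κ_le_one : κ ≤ 1
  r_pos : 0 < r
  norm_k_le : ‖k‖ ≤ κ * r / 6
  one_le : 1 ≤ κ ^ (b + 1) * r ^ b
  norm_le_one : ∀ l, ‖ψ l‖ ≤ 1
  eigen : ∀ n, ((‖p n + k‖ ^ 2 : ℝ) : ℂ) * ψ n + ∑' l, V (n - l) * ψ l = ((r ^ 2 : ℝ) : ℂ) * ψ n

variable {p V b} {κ r : ℝ} {k : E} {ψ : ι → ℂ}

namespace IsHighEnergyEigen

lemma norm_mul_le_add (h : IsHighEnergyEigen p V b κ r k ψ) {j : ℕ} {M : ℝ}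
    (hM : ∀ l, (1 + j * κ) * r ≤ ‖p l‖ → ‖ψ l‖ * κ ^ j * ‖p l‖ ^ (2 * j) ≤ M)
    {n : ι} (hn : (1 + (j + 1) * κ) * r ≤ ‖p n‖) (l : ι) :
    ‖ψ l‖ * (κ ^ j * ‖p n‖ ^ (2 * j)) ≤
      (j + 2) ^ (j + (b + 1) * j) * ‖p (n - l)‖ ^ (j + (b + 1) * j) + 4 ^ j * M := by
  obtain ⟨hκ0, hκ1, hr0, -, hhigh, hψ1, -⟩ := h
  set ρ := ‖p n‖
  have hρr : r ≤ ρ :=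
    le_trans (by nlinarith [mul_nonneg (j.cast_add_one_pos (α := ℝ)).le hκ0.le]) hn
  -- `s = j + (b + 1) * j` makes `(κ ρ) ^ s = κ ^ j ρ ^ (2 j) (κ ^ (b + 1) ρ ^ b) ^ j`, so the
  -- high-energy condition turns the decay of `V` into the required decay in `ρ`.
  by_cases hfar : (1 + j * κ) * r ≤ ‖p l‖ ∧ ρ / 2 ≤ ‖p l‖
  · have hρl : ρ ^ (2 * j) ≤ 4 ^ j * ‖p l‖ ^ (2 * j) := by
      calc ρ ^ (2 * j) ≤ (2 * ‖p l‖) ^ (2 * j) := by gcongr; linarith [hfar.2]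
        _ = 4 ^ j * ‖p l‖ ^ (2 * j) := by rw [mul_pow, pow_mul]; norm_num
    calc ‖ψ l‖ * (κ ^ j * ρ ^ (2 * j)) ≤ ‖ψ l‖ * (κ ^ j * (4 ^ j * ‖p l‖ ^ (2 * j))) := by
          gcongr
      _ = 4 ^ j * (‖ψ l‖ * κ ^ j * ‖p l‖ ^ (2 * j)) := by ring
      _ ≤ 4 ^ j * M := by gcongr; exact hM l hfar.1
      _ ≤ (j + 2) ^ (j + (b + 1) * j) * ‖p (n - l)‖ ^ (j + (b + 1) * j) + 4 ^ j * M :=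
          le_add_of_nonneg_left (by positivity)
  · rw [not_and_or, not_le, not_le] at hfar
    have hρ0 : 0 < ρ := hr0.trans_le hρr
    have hM0 : 0 ≤ M := le_trans (by positivity)
      (hM n (le_trans (by nlinarith [mul_nonneg hκ0.le hr0.le]) hn))
    have hnl : ρ - ‖p l‖ ≤ ‖p (n - l)‖ := by rw [map_sub]; exact norm_sub_norm_le _ _
    have hκρ := mul_le_add_two_mul_of_lt_or_lt hκ0 hκ1 hr0.le hn hfar hnl
    calc ‖ψ l‖ * (κ ^ j * ρ ^ (2 * j)) ≤ κ ^ j * ρ ^ (2 * j) * (κ ^ (b + 1) * ρ ^ b) ^ j := by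
          rw [mul_comm]
          gcongr
          exact (hψ1 l).trans (one_le_pow₀ (hhigh.trans (by gcongr)))
      _ = (κ * ρ) ^ (j + (b + 1) * j) := by ring
      _ ≤ ((j + 2) * ‖p (n - l)‖) ^ (j + (b + 1) * j) := by gcongr
      _ ≤ (j + 2) ^ (j + (b + 1) * j) * ‖p (n - l)‖ ^ (j + (b + 1) * j) + 4 ^ j * M := by
          rw [mul_pow]; exact le_add_of_nonneg_right (by positivity)

lemma norm_mul_pow_succ_le (h : IsHighEnergyEigen p V b κ r k ψ)
    (hV : ∀ t, Summable fun q => ‖p q‖ ^ t * ‖V q‖) {j : ℕ} {M : ℝ}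
    (hM : ∀ l, (1 + j * κ) * r ≤ ‖p l‖ → ‖ψ l‖ * κ ^ j * ‖p l‖ ^ (2 * j) ≤ M)
    {n : ι} (hn : (1 + (j + 1) * κ) * r ≤ ‖p n‖) :
    ‖ψ n‖ * κ ^ (j + 1) * ‖p n‖ ^ (2 * (j + 1)) ≤
      3 * ((j + 2) ^ (j + (b + 1) * j) * weightedNorm p V (j + (b + 1) * j)
        + 4 ^ j * M * weightedNorm p V 0) := by
  set ρ := ‖p n‖
  set s := j + (b + 1) * j
  set D := κ ^ j * ρ ^ (2 * j)
  have hκ0 := h.κ_pos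
  have hρr : (1 + κ) * r ≤ ρ :=
    le_trans (by nlinarith [mul_nonneg (mul_nonneg j.cast_nonneg hκ0.le) h.r_pos.le]) hn
  have hD : 0 < D := by
    have : 0 < ρ := lt_of_lt_of_le (by have := h.r_pos; positivity) hρr
    positivity
  have hψ : ∀ l, ‖ψ l‖ ≤ (j + 2) ^ s / D * ‖p (n - l)‖ ^ s + 4 ^ j * M / D := fun l => by
    rw [div_mul_eq_mul_div, ← add_div, le_div_iff₀ hD]
    exact h.norm_mul_le_add hM hn l
  have hden : r ^ 2 + κ * ρ ^ 2 / 3 ≤ ‖p n + k‖ ^ 2 :=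
    sq_add_mul_norm_sq_le_norm_add_sq hκ0 h.κ_le_one h.r_pos.le h.norm_k_le hρr
  calc ‖ψ n‖ * κ ^ (j + 1) * ρ ^ (2 * (j + 1)) = 3 * D * (κ * ρ ^ 2 / 3 * ‖ψ n‖) := by ring
    _ ≤ 3 * D * ((j + 2) ^ s / D * weightedNorm p V s
          + 4 ^ j * M / D * weightedNorm p V 0) := by
        gcongr
        exact (mul_norm_le_norm_of_mul_add_eq (h.eigen n) hden).trans (norm_tsum_conv_le hV hψ)
    _ = 3 * ((j + 2) ^ s * weightedNorm p V s + 4 ^ j * M * weightedNorm p V 0) := by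
        field_simp

end IsHighEnergyEigen

theorem exists_norm_mul_pow_le (hV : ∀ t, Summable fun q => ‖p q‖ ^ t * ‖V q‖) (b j : ℕ) :
    ∃ M, ∀ (κ r : ℝ) (k : E) (ψ : ι → ℂ), IsHighEnergyEigen p V b κ r k ψ →
      ∀ n, (1 + j * κ) * r ≤ ‖p n‖ → ‖ψ n‖ * κ ^ j * ‖p n‖ ^ (2 * j) ≤ M := by
  induction j with
  | zero => exact ⟨1, fun κ r k ψ h n _ => by simpa using h.norm_le_one n⟩
  | succ j ih =>
    obtain ⟨M, hM⟩ := ih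
    exact ⟨_, fun κ r k ψ h n hn =>
      h.norm_mul_pow_succ_le hV (hM κ r k ψ h) (by exact_mod_cast hn)⟩

end Eigen

section Lattice

variable {d : ℕ} (B : (Fin d → ℝ) ≃ₗ[ℝ] EuclideanSpace ℝ (Fin d))

noncomputable def latticePtHom : (Fin d → ℤ) →+ EuclideanSpace ℝ (Fin d) :=
  AddMonoidHom.mk' (latticePt d B) fun u v => by
    simp only [latticePt, Pi.add_apply, Int.cast_add, ← map_add]
    rfl

lemma latticePt_mem_span (q : Fin d → ℤ) :
    latticePt d B q ∈ Submodule.span ℤ (Set.range ((Pi.basisFun ℝ (Fin d)).map B)) := by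
  rw [Module.Basis.mem_span_iff_repr_mem]
  intro i
  simp [latticePt]

lemma latticePt_injective : Function.Injective (latticePt d B) := fun u v h => by
  funext i
  exact_mod_cast congrFun (B.injective h) i

lemma summable_norm_latticePt_inv_pow {n : ℕ} (hn : d < n) :
    Summable fun q => ‖latticePt d B q‖⁻¹ ^ n := by
  let L := Submodule.span ℤ (Set.range ((Pi.basisFun ℝ (Fin d)).map B))
  have hrank : Module.finrank ℤ L = d := by
    rw [ZLattice.rank ℝ, finrank_euclideanSpace_fin]
  have hL : Summable fun z : L => ‖z‖⁻¹ ^ n :=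
    ZLattice.summable_norm_pow_inv L n (by rwa [hrank])
  let f : (Fin d → ℤ) → L := fun q => ⟨latticePt d B q, latticePt_mem_span B q⟩
  exact hL.comp_injective (i := f) fun u v h => latticePt_injective B (congrArg Subtype.val h)

lemma summable_norm_latticePt_pow_mul {Vc : (Fin d → ℤ) → ℂ}
    (hV : ∀ s : ℕ, Summable fun l => ‖latticePt d B l‖ ^ (2 * s) * ‖Vc l‖ ^ 2) (t : ℕ) :
    Summable fun q => ‖latticePtHom B q‖ ^ t * ‖Vc q‖ := by
  refine Summable.of_norm_bounded_eventually ((hV (t + (d + 1))).add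
    (summable_norm_latticePt_inv_pow B (n := 2 * (d + 1)) (by omega))) ?_
  filter_upwards [Filter.eventually_cofinite_ne 0] with q hq
  set x := ‖latticePt d B q‖
  have hx : x ≠ 0 := by
    rw [norm_ne_zero_iff, ← (latticePtHom B).map_zero]
    exact (latticePt_injective B).ne hq
  rw [Real.norm_of_nonneg (by positivity)]
  calc x ^ t * ‖Vc q‖ = x ^ (t + (d + 1)) * ‖Vc q‖ * x⁻¹ ^ (d + 1) := by
        rw [pow_add, inv_pow]; field_simp
    _ ≤ (x ^ (t + (d + 1)) * ‖Vc q‖) ^ 2 + (x⁻¹ ^ (d + 1)) ^ 2 := by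
        nlinarith [sq_nonneg (x ^ (t + (d + 1)) * ‖Vc q‖ - x⁻¹ ^ (d + 1))]
    _ = x ^ (2 * (t + (d + 1))) * ‖Vc q‖ ^ 2 + x⁻¹ ^ (2 * (d + 1)) := by ring

end Lattice

lemma norm_le_one_of_tsum_sq_eq_one {α : Type*} {ψ : α → ℂ}
    (hS : Summable fun n => ‖ψ n‖ ^ 2) (hN : ∑' n, ‖ψ n‖ ^ 2 = 1) (l : α) : ‖ψ l‖ ≤ 1 :=
  (pow_le_one_iff_of_nonneg (norm_nonneg _) two_ne_zero).1
    (hN ▸ hS.le_tsum l fun _ _ => sq_nonneg _)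

lemma le_mul_sqrt_div_six {y Q κ ζ : ℝ} (hκ : 0 < κ) (hy : 0 ≤ y) (hyQ : y ≤ Q)
    (hζ : 36 * Q ^ 2 * κ⁻¹ ^ 2 ≤ ζ) : y ≤ κ * √ζ / 6 := by
  have h : 6 * y / κ ≤ √ζ := by
    refine le_trans (le_abs_self _) (Real.abs_le_sqrt (le_trans ?_ hζ))
    rw [div_pow, div_eq_mul_inv, inv_pow]
    gcongr
    nlinarith
  rw [div_le_iff₀ hκ] at h
  linarith

lemma one_le_pow_succ_mul_sqrt_pow {κ ζ : ℝ} {b : ℕ} (hκ : 0 < κ) (hb : b ≠ 0)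
    (hζ : κ ^ (-2 * ((b : ℝ) + 1) / b) ≤ ζ) : 1 ≤ κ ^ (b + 1) * √ζ ^ b := by
  have h : κ ^ (-((b : ℝ) + 1)) ≤ √ζ ^ b :=
    calc κ ^ (-((b : ℝ) + 1)) = √(κ ^ (-2 * ((b : ℝ) + 1) / b)) ^ b := by
          rw [Real.sqrt_eq_rpow, ← Real.rpow_mul hκ.le, ← Real.rpow_natCast,
            ← Real.rpow_mul hκ.le]
          congr 1
          field_simp
      _ ≤ √ζ ^ b := by gcongr
  calc (1 : ℝ) = κ ^ (b + 1) * κ ^ (-((b : ℝ) + 1)) := by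
        rw [Real.rpow_neg hκ.le, ← Nat.cast_add_one, Real.rpow_natCast,
          mul_inv_cancel₀ (by positivity)]
    _ ≤ κ ^ (b + 1) * √ζ ^ b := by gcongr

lemma lt_two_mul_rpow_of_mul_pow_le {x κ ρ M : ℝ} {m : ℕ} (hm : 1 ≤ m) (hκ : 0 < κ)
    (hρ : 1 ≤ ρ) (hM : 0 < M) (h : x * κ ^ m * ρ ^ (2 * m) ≤ M) :
    x < 2 * M * κ ^ (-(m : ℝ)) * ρ ^ (-(3 * (m : ℝ) + 1) / 2) := by
  have hρ0 : 0 < ρ := one_pos.trans_le hρ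
  have hx : x ≤ M * κ ^ (-(m : ℝ)) * ρ ^ (-(2 * m : ℝ)) := by
    rw [Real.rpow_neg hκ.le, Real.rpow_neg hρ0.le, Real.rpow_natCast,
      show (2 * m : ℝ) = ((2 * m : ℕ) : ℝ) by push_cast; ring, Real.rpow_natCast,
      ← div_eq_mul_inv, ← div_eq_mul_inv, div_div, le_div_iff₀ (by positivity), ← mul_assoc]
    exact h
  have hexp : ρ ^ (-(2 * m : ℝ)) ≤ ρ ^ (-(3 * (m : ℝ) + 1) / 2) :=
    Real.rpow_le_rpow_of_exponent_le hρ (by linarith [(Nat.one_le_cast (α := ℝ)).2 hm])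
  have hpos : 0 < M * κ ^ (-(m : ℝ)) * ρ ^ (-(3 * (m : ℝ) + 1) / 2) := by positivity
  calc x ≤ M * κ ^ (-(m : ℝ)) * ρ ^ (-(3 * (m : ℝ) + 1) / 2) :=
        hx.trans (by gcongr)
    _ < 2 * M * κ ^ (-(m : ℝ)) * ρ ^ (-(3 * (m : ℝ) + 1) / 2) := by linarith

end BlochDecay

open BlochDecay in
theorem stmt12_general (d : ℕ) (hd : 2 ≤ d)
    (B : (Fin d → ℝ) ≃ₗ[ℝ] EuclideanSpace ℝ (Fin d))
    (Vc : (Fin d → ℤ) → ℂ)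
    (hVsm : ∀ s : ℕ, Summable fun l : Fin d → ℤ => ‖latticePt d B l‖ ^ (2 * s) * ‖Vc l‖ ^ 2)
    (Q : ℝ) (m : ℕ) (hm : 1 ≤ m) :
    ∃ M : ℝ, 0 < M ∧ ∀ κ : ℝ, κ ∈ Set.Ioo (0:ℝ) 1 →
      ∀ (k : EuclideanSpace ℝ (Fin d)) (ζ : ℝ) (ψ : (Fin d → ℤ) → ℂ),
        ‖k‖ ≤ Q →
        max (36 * Q ^ 2 * κ⁻¹ ^ 2)
            ((1 + (m : ℝ) * κ) ^ ((2:ℝ)/((d:ℝ)-1)) * κ ^ (-(2:ℝ)*(d:ℝ)/((d:ℝ)-1))) ≤ ζ →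
        Summable (fun n => ‖ψ n‖ ^ 2) →
        (∑' n, ‖ψ n‖ ^ 2) = 1 →
        (∀ n : Fin d → ℤ,
          ((‖latticePt d B n + k‖ ^ 2 : ℝ) : ℂ) * ψ n + ∑' l, Vc (n - l) * ψ l
            = (ζ : ℂ) * ψ n) →
        ∀ n : Fin d → ℤ, (1 + (m : ℝ) * κ) * Real.sqrt ζ ≤ ‖latticePt d B n‖ →
          ‖ψ n‖ < M * κ ^ (-(m:ℝ)) * ‖latticePt d B n‖ ^ (-(3*(m:ℝ)+1)/2) := by
  obtain ⟨b, rfl⟩ : ∃ b, d = b + 1 := ⟨d - 1, by omega⟩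
  obtain ⟨M, hM⟩ := exists_norm_mul_pow_le (summable_norm_latticePt_pow_mul B hVsm) b m
  refine ⟨2 * max M 1, by positivity, fun κ ⟨hκ0, hκ1⟩ k ζ ψ hk hζ hS hN hE n hn => ?_⟩
  have hζκ : κ ^ (-2 * ((b : ℝ) + 1) / b) ≤ ζ := by
    refine le_trans ?_ ((le_max_right _ _).trans hζ)
    push_cast
    rw [add_sub_cancel_right, neg_mul]
    exact le_mul_of_one_le_left (by positivity)
      (Real.one_le_rpow (le_add_of_nonneg_right (by positivity)) (by positivity))
  have hζ0 : 0 < ζ := (Real.rpow_pos_of_pos hκ0 _).trans_le hζκ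
  have hψ : IsHighEnergyEigen (latticePtHom B) Vc b κ √ζ k ψ :=
    { κ_pos := hκ0, κ_le_one := hκ1.le, r_pos := Real.sqrt_pos.2 hζ0
      norm_k_le := le_mul_sqrt_div_six hκ0 (norm_nonneg k) hk ((le_max_left _ _).trans hζ)
      one_le := one_le_pow_succ_mul_sqrt_pow hκ0 (by omega) hζκ
      norm_le_one := norm_le_one_of_tsum_sq_eq_one hS hN
      eigen := fun n => by rw [Real.sq_sqrt hζ0.le]; exact hE n }
  have hρ : 1 ≤ ‖latticePt (b + 1) B n‖ := by
    have h1 : 1 ≤ √ζ := Real.one_le_sqrt.2 (le_trans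
      (Real.one_le_rpow_of_pos_of_le_one_of_nonpos hκ0 hκ1.le
      (div_nonpos_of_nonpos_of_nonneg (by linarith) b.cast_nonneg)) hζκ)
    nlinarith [mul_nonneg (Nat.cast_nonneg m : (0 : ℝ) ≤ m) hκ0.le]
  exact lt_two_mul_rpow_of_mul_pow_le hm hκ0 hρ (by positivity)
    ((hM κ _ k ψ hψ n hn).trans (le_max_left M 1))

/-- Fourier coefficient decay for high-energy Bloch eigenfunctions (Lemma 4.1).
The eigenfunction is described by its Fourier coefficients `ψ : Λ† → ℂ`, normalized
(`∑ |ψ_n|² = 1`) and satisfying the recursion `|n+k|²ψ_n + ∑_l V_{n-l}ψ_l = ζψ_n`;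
smoothness of `V` is encoded by finiteness of all weighted norms
`∑ |n|^{2s} |V_n|² < ∞`. Then there is `M_m > 0` (independent of `ϰ`, `k`, `ψ`, `ζ`)
such that `|ψ_n| < M_m ϰ^{-m} |n|^{-(3m+1)/2}` whenever `|n| ≥ (1+mϰ)√ζ` and
`ζ ≥ max{36Q²ϰ⁻², (1+mϰ)^{2/(d-1)}ϰ^{-2d/(d-1)}}`, `|k| ≤ Q`. -/
theorem stmt12 (d : ℕ) (hd : 2 ≤ d)
    (B : (Fin d → ℝ) ≃ₗ[ℝ] EuclideanSpace ℝ (Fin d))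
    (Vc : (Fin d → ℤ) → ℂ)
    (hVsm : ∀ s : ℕ, Summable fun l : Fin d → ℤ => ‖latticePt d B l‖ ^ (2 * s) * ‖Vc l‖ ^ 2)
    (Q : ℝ) (hQ : 0 < Q) (m : ℕ) (hm : 1 ≤ m) :
    ∃ M : ℝ, 0 < M ∧ ∀ κ : ℝ, κ ∈ Set.Ioo (0:ℝ) 1 →
      ∀ (k : EuclideanSpace ℝ (Fin d)) (ζ : ℝ) (ψ : (Fin d → ℤ) → ℂ),
        ‖k‖ ≤ Q →
        max (36 * Q ^ 2 * κ⁻¹ ^ 2)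
            ((1 + (m : ℝ) * κ) ^ ((2:ℝ)/((d:ℝ)-1)) * κ ^ (-(2:ℝ)*(d:ℝ)/((d:ℝ)-1))) ≤ ζ →
        Summable (fun n => ‖ψ n‖ ^ 2) →
        (∑' n, ‖ψ n‖ ^ 2) = 1 →
        (∀ n : Fin d → ℤ,
          ((‖latticePt d B n + k‖ ^ 2 : ℝ) : ℂ) * ψ n + ∑' l, Vc (n - l) * ψ l
            = (ζ : ℂ) * ψ n) →
        ∀ n : Fin d → ℤ, (1 + (m : ℝ) * κ) * Real.sqrt ζ ≤ ‖latticePt d B n‖ →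
          ‖ψ n‖ < M * κ ^ (-(m:ℝ)) * ‖latticePt d B n‖ ^ (-(3*(m:ℝ)+1)/2) :=
  stmt12_general d hd B Vc hVsm Q m hm
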